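/- Every t-layer ReLU-activated encoder is a spline of degree 3^t: if ε_t = φ_t ∘ α_t ∘ φ_{t−1} ∘ α_{t−1} ∘ ⋯ ∘ φ_1 ∘ α_1 : ℝ^{n×p} → ℝ^{n_{t+1}×p}, where each α_i is a multihead ReLU attention module and each φ_i is a ReLU feed-forward neural network applied columnwise, then ε_t is a matrix-valued spline of degree 3^t. -/
import Mathlib


noncomputable section

open Matrix

/-- The rectified linear unit. -/
def relu (x : ℝ) : ℝ := max x 0

/-- Entrywise ReLU of a matrix. -/
def matRelu {a b : ℕ} (M : Matrix (Fin a) (Fin b) ℝ) : Matrix (Fin a) (Fin b) ℝ :=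
  Matrix.of fun i j => relu (M i j)

/-- A continuous function `f : ℝ^ι → ℝ` is a (polynomial) spline of degree `k` if there are
polynomials `π_1, …, π_b`, each of total degree at most `k`, such that on every (nonempty) cell
of the induced semialgebraic sign partition, `f` agrees with a polynomial of degree at most `k`. -/
def IsSpline (ι : Type) [Fintype ι] (k : ℕ) (f : (ι → ℝ) → ℝ) : Prop :=
  Continuous f ∧
  ∃ (b : ℕ) (π : Fin b → MvPolynomial ι ℝ),
    (∀ i, (π i).totalDegree ≤ k) ∧
    ∀ θ : Fin b → SignType,
      ∃ ξ : MvPolynomial ι ℝ, ξ.totalDegree ≤ k ∧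
        ∀ x : ι → ℝ, (∀ i, SignType.sign (MvPolynomial.eval x (π i)) = θ i) →
          f x = MvPolynomial.eval x ξ

/-- A matrix-variate, matrix-valued function is a spline of degree `k` if each coordinate
function, regarded as a function of the entries of the input matrix, is a spline of degree `k`. -/
def IsMatrixSpline {n p m q : ℕ} (k : ℕ)
    (f : Matrix (Fin n) (Fin p) ℝ → Matrix (Fin m) (Fin q) ℝ) : Prop :=
  ∀ (i : Fin m) (j : Fin q),
    IsSpline (Fin n × Fin p) k (fun x => f (Matrix.of fun a b => x (a, b)) i j)

/-- The ReLU-activated attention module `α(X) = (A_V X + B_V) · ReLU((A_K X + B_K)ᵀ (A_Q X + B_Q))`. -/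
def attention {n p d m : ℕ}
    (AQ AK : Matrix (Fin d) (Fin n) ℝ) (AV : Matrix (Fin m) (Fin n) ℝ)
    (BQ BK : Matrix (Fin d) (Fin p) ℝ) (BV : Matrix (Fin m) (Fin p) ℝ)
    (X : Matrix (Fin n) (Fin p) ℝ) : Matrix (Fin m) (Fin p) ℝ :=
  (AV * X + BV) * matRelu ((AK * X + BK)ᵀ * (AQ * X + BQ))

/-- An `h`-headed ReLU attention module: `h` attention modules stacked vertically, giving a map
`ℝ^{n×p} → ℝ^{hm×p}`. -/
def multiheadAttention {n p d m h : ℕ}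
    (AQ AK : Fin h → Matrix (Fin d) (Fin n) ℝ) (AV : Fin h → Matrix (Fin m) (Fin n) ℝ)
    (BQ BK : Fin h → Matrix (Fin d) (Fin p) ℝ) (BV : Fin h → Matrix (Fin m) (Fin p) ℝ)
    (X : Matrix (Fin n) (Fin p) ℝ) : Matrix (Fin (h * m)) (Fin p) ℝ :=
  Matrix.of fun i j =>
    attention (AQ (finProdFinEquiv.symm i).1) (AK (finProdFinEquiv.symm i).1)
      (AV (finProdFinEquiv.symm i).1) (BQ (finProdFinEquiv.symm i).1)
      (BK (finProdFinEquiv.symm i).1) (BV (finProdFinEquiv.symm i).1) X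
      (finProdFinEquiv.symm i).2 j

/-- ReLU feed-forward neural networks `φ(x) = A_{l+1} σ_l A_l ⋯ σ_1 A_1 x + b_{l+1}`, where
`σ_i(x) = ReLU(x + b_i)` coordinatewise: the base case is an affine map, and each additional
layer precomposes with `x ↦ ReLU(A x + b)`. -/
inductive IsNN : ∀ {a b : ℕ}, ((Fin a → ℝ) → (Fin b → ℝ)) → Prop
  | affine {a b : ℕ} (A : Matrix (Fin b) (Fin a) ℝ) (c : Fin b → ℝ) :
      IsNN (fun x => A.mulVec x + c)
  | layer {a b c : ℕ} (A : Matrix (Fin b) (Fin a) ℝ) (v : Fin b → ℝ)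
      {g : (Fin b → ℝ) → (Fin c → ℝ)} (hg : IsNN g) :
      IsNN (fun x => g (fun i => relu (A.mulVec x i + v i)))

/-- Apply a map `φ : ℝ^a → ℝ^c` columnwise to a matrix `X ∈ ℝ^{a×p}`. -/
def colwise {a c p : ℕ} (φ : (Fin a → ℝ) → (Fin c → ℝ))
    (X : Matrix (Fin a) (Fin p) ℝ) : Matrix (Fin c) (Fin p) ℝ :=
  Matrix.of fun i j => φ (fun r => X r j) i

/-- An encoder block: a multihead ReLU attention module followed by a ReLU feed-forward
neural network applied columnwise. -/
def IsEncoderBlock {n r p : ℕ}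
    (f : Matrix (Fin n) (Fin p) ℝ → Matrix (Fin r) (Fin p) ℝ) : Prop :=
  ∃ (d m h : ℕ)
    (AQ AK : Fin h → Matrix (Fin d) (Fin n) ℝ) (AV : Fin h → Matrix (Fin m) (Fin n) ℝ)
    (BQ BK : Fin h → Matrix (Fin d) (Fin p) ℝ) (BV : Fin h → Matrix (Fin m) (Fin p) ℝ)
    (φ : (Fin (h * m) → ℝ) → (Fin r → ℝ)), IsNN φ ∧
      f = fun X => colwise φ (multiheadAttention AQ AK AV BQ BK BV X)

/-- A `t`-layer encoder: the composition of `t` encoder blocks. -/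
inductive IsEncoder {p : ℕ} : ∀ {n r : ℕ}, ℕ →
    (Matrix (Fin n) (Fin p) ℝ → Matrix (Fin r) (Fin p) ℝ) → Prop
  | block {n r : ℕ} (f : Matrix (Fin n) (Fin p) ℝ → Matrix (Fin r) (Fin p) ℝ)
      (hf : IsEncoderBlock f) : IsEncoder 1 f
  | comp {n s r : ℕ} (t : ℕ) (f : Matrix (Fin n) (Fin p) ℝ → Matrix (Fin s) (Fin p) ℝ)
      (g : Matrix (Fin s) (Fin p) ℝ → Matrix (Fin r) (Fin p) ℝ)
      (hf : IsEncoderBlock f) (hg : IsEncoder t g) : IsEncoder (t + 1) (g ∘ f)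

open MvPolynomial

lemma continuous_relu : Continuous relu := continuous_id.max continuous_const

lemma eval_bind₁' {ι κ : Type*} (x : ι → ℝ) (g : κ → MvPolynomial ι ℝ) (φ : MvPolynomial κ ℝ) :
    eval x (bind₁ g φ) = eval (fun j => eval x (g j)) φ := by
  simpa using eval₂Hom_bind₁ (RingHom.id ℝ) x g φ

lemma totalDegree_bind₁_le {ι κ : Type*} (ξ : κ → MvPolynomial ι ℝ) (p : MvPolynomial κ ℝ)
    {k : ℕ} (h : ∀ j, (ξ j).totalDegree ≤ k) :
    (bind₁ ξ p).totalDegree ≤ p.totalDegree * k := by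
  conv_lhs => rw [p.as_sum]
  rw [map_sum]
  refine totalDegree_finsetSum_le fun s hs => ?_
  rw [bind₁_monomial]
  refine (totalDegree_mul _ _).trans ?_
  rw [totalDegree_C, zero_add]
  refine (totalDegree_finset_prod _ _).trans ?_
  calc ∑ i ∈ s.support, (ξ i ^ s i).totalDegree
      ≤ ∑ i ∈ s.support, s i * k :=
        Finset.sum_le_sum fun i _ => (totalDegree_pow _ _).trans (Nat.mul_le_mul_left _ (h i))
    _ = (∑ i ∈ s.support, s i) * k := (Finset.sum_mul ..).symm
    _ ≤ p.totalDegree * k := Nat.mul_le_mul_right _ (le_totalDegree hs)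

/-- Per-coordinate spline data (with an arbitrary finite partition index). -/
def SplineData (ι : Type) [Fintype ι] (k : ℕ) (g : (ι → ℝ) → ℝ) : Prop :=
  ∃ (B : Type) (_ : Fintype B) (π : B → MvPolynomial ι ℝ),
    (∀ i, (π i).totalDegree ≤ k) ∧
    ∀ θ : B → SignType, ∃ ξ : MvPolynomial ι ℝ, ξ.totalDegree ≤ k ∧
      ∀ x, (∀ i, SignType.sign (eval x (π i)) = θ i) → g x = eval x ξ

/-- A continuous family of splines. -/
def FamSpline (ι κ : Type) [Fintype ι] [Fintype κ] (k : ℕ) (f : (ι → ℝ) → κ → ℝ) : Prop :=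
  Continuous f ∧ ∀ j, SplineData ι k (fun x => f x j)

lemma FamSpline.congr {ι κ : Type} [Fintype ι] [Fintype κ] {k : ℕ}
    {f f' : (ι → ℝ) → κ → ℝ} (h : FamSpline ι κ k f) (he : ∀ x, f x = f' x) :
    FamSpline ι κ k f' := by
  have : f = f' := funext he
  rwa [← this]

/-- Common refinement of the partitions of all coordinates. -/
lemma FamSpline.common {ι κ : Type} [Fintype ι] [Fintype κ] {k : ℕ}
    {f : (ι → ℝ) → κ → ℝ} (h : FamSpline ι κ k f) :
    ∃ (B : Type) (_ : Fintype B) (π : B → MvPolynomial ι ℝ),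
      (∀ i, (π i).totalDegree ≤ k) ∧
      ∀ θ : B → SignType, ∃ ξ : κ → MvPolynomial ι ℝ, (∀ j, (ξ j).totalDegree ≤ k) ∧
        ∀ x, (∀ i, SignType.sign (eval x (π i)) = θ i) → ∀ j, f x j = eval x (ξ j) := by
  choose B iB π hdeg hp using h.2
  letI : ∀ j, Fintype (B j) := iB
  refine ⟨Σ j, B j, inferInstance, fun b => π b.1 b.2, fun b => hdeg b.1 b.2, fun θ => ?_⟩
  choose ξ hξd hξ using fun j => hp j (fun i => θ ⟨j, i⟩)
  exact ⟨ξ, hξd, fun x hx j => hξ j x fun i => hx ⟨j, i⟩⟩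

/-- Composition of spline families. -/
lemma FamSpline.comp {ι κ μ : Type} [Fintype ι] [Fintype κ] [Fintype μ] {k l : ℕ}
    (hl : 1 ≤ l) {f : (ι → ℝ) → κ → ℝ} {g : (κ → ℝ) → μ → ℝ}
    (hf : FamSpline ι κ k f) (hg : FamSpline κ μ l g) :
    FamSpline ι μ (k * l) (fun x => g (f x)) := by
  obtain ⟨B, iB, π, hπ, hpiece⟩ := hf.common
  refine ⟨hg.1.comp hf.1, fun j => ?_⟩
  obtain ⟨Bg, iBg, ρ, hρ, hgp⟩ := hg.2 j
  choose ξ hξd hξ using hpiece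
  letI := iB
  letI := iBg
  classical
  refine ⟨B ⊕ ((B → SignType) × Bg), inferInstance,
    Sum.elim π (fun q => bind₁ (ξ q.1) (ρ q.2)), ?_, ?_⟩
  · rintro (i | ⟨θ, i⟩)
    · exact (hπ i).trans (Nat.le_mul_of_pos_right _ hl)
    · refine (totalDegree_bind₁_le _ _ (hξd θ)).trans ?_
      rw [mul_comm k l]
      exact Nat.mul_le_mul_right _ (hρ i)
  · intro Θ
    set θ : B → SignType := fun b => Θ (Sum.inl b) with hθ
    obtain ⟨ζ, hζd, hζ⟩ := hgp (fun i => Θ (Sum.inr (θ, i)))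
    refine ⟨bind₁ (ξ θ) ζ, ?_, ?_⟩
    · refine (totalDegree_bind₁_le _ _ (hξd θ)).trans ?_
      rw [mul_comm k l]
      exact Nat.mul_le_mul_right _ hζd
    · intro x hx
      have hfx : ∀ jj, f x jj = eval x (ξ θ jj) := hξ θ x fun i => hx (Sum.inl i)
      have hfx' : f x = fun jj => eval x (ξ θ jj) := funext hfx
      rw [eval_bind₁', ← hfx']
      refine hζ (f x) fun i => ?_
      rw [hfx', ← eval_bind₁']
      exact hx (Sum.inr (θ, i))

/-- Polynomial maps are spline families. -/
lemma FamSpline.ofPoly {ι κ : Type} [Fintype ι] [Fintype κ] {k : ℕ}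
    {f : (ι → ℝ) → κ → ℝ} (P : κ → MvPolynomial ι ℝ)
    (hd : ∀ j, (P j).totalDegree ≤ k) (he : ∀ x j, f x j = eval x (P j)) :
    FamSpline ι κ k f := by
  constructor
  · refine continuous_pi fun j => ?_
    have : (fun x => f x j) = fun x => eval x (P j) := funext fun x => he x j
    rw [this]
    exact MvPolynomial.continuous_eval _
  · intro j
    exact ⟨Empty, inferInstance, fun i => i.elim, fun i => i.elim,
      fun θ => ⟨P j, hd j, fun x _ => he x j⟩⟩

/-- A function whose every coordinate is a coordinate of some spline family is one. -/
lemma FamSpline.ofCoords {ι κ : Type} [Fintype ι] [Fintype κ] {k : ℕ}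
    {f : (ι → ℝ) → κ → ℝ}
    (h : ∀ j, ∃ (κ' : Type) (_ : Fintype κ') (g : (ι → ℝ) → κ' → ℝ) (j' : κ'),
      FamSpline ι κ' k g ∧ ∀ x, f x j = g x j') :
    FamSpline ι κ k f := by
  constructor
  · refine continuous_pi fun j => ?_
    obtain ⟨κ', _, g, j', hg, he⟩ := h j
    have : (fun x => f x j) = fun x => g x j' := funext he
    rw [this]
    exact (continuous_apply j').comp hg.1
  · intro j
    obtain ⟨κ', _, g, j', hg, he⟩ := h j
    obtain ⟨B, iB, π, hd, hp⟩ := hg.2 j'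
    refine ⟨B, iB, π, hd, fun θ => ?_⟩
    obtain ⟨ξ, h1, h2⟩ := hp θ
    exact ⟨ξ, h1, fun x hx => (he x).trans (h2 x hx)⟩

/-- Sums of polynomial × ReLU-of-polynomial terms are spline families. -/
lemma FamSpline.reluSum {ι κ S : Type} [Fintype ι] [Fintype κ] [Fintype S] {a c : ℕ}
    (P Q : κ → S → MvPolynomial ι ℝ)
    (hP : ∀ j s, (P j s).totalDegree ≤ a) (hQ : ∀ j s, (Q j s).totalDegree ≤ c)
    {f : (ι → ℝ) → κ → ℝ}
    (he : ∀ x j, f x j = ∑ s, eval x (P j s) * relu (eval x (Q j s))) :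
    FamSpline ι κ (a + c) f := by
  classical
  constructor
  · refine continuous_pi fun j => ?_
    have : (fun x => f x j) = fun x => ∑ s, eval x (P j s) * relu (eval x (Q j s)) :=
      funext fun x => he x j
    rw [this]
    exact continuous_finset_sum _ fun s _ =>
      (MvPolynomial.continuous_eval _).mul (continuous_relu.comp (MvPolynomial.continuous_eval _))
  · intro j
    refine ⟨S, inferInstance, fun s => Q j s, fun s => (hQ j s).trans (Nat.le_add_left _ _),
      fun θ => ⟨∑ s, P j s * (if θ s = 1 then Q j s else 0), ?_, ?_⟩⟩
    · refine totalDegree_finsetSum_le fun s _ => (totalDegree_mul _ _).trans ?_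
      refine add_le_add (hP j s) ?_
      split
      · exact hQ j s
      · simp
    · intro x hx
      show f x j = _
      rw [he x j, map_sum]
      refine Finset.sum_congr rfl fun s _ => ?_
      rw [_root_.map_mul]
      congr 1
      rcases hs : θ s with _ | _ | _
      · have h0 : eval x (Q j s) = 0 := by
          have := hx s; rw [hs] at this; exact sign_eq_zero_iff.mp this
        simp [hs, relu, h0]
      · have h0 : eval x (Q j s) < 0 := by
          have := hx s; rw [hs] at this
          exact sign_eq_neg_one_iff.mp (by simpa using this)
        simp [hs, relu, max_eq_right h0.le]
      · have h0 : (0:ℝ) < eval x (Q j s) := by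
          have := hx s; rw [hs] at this
          exact sign_eq_one_iff.mp (by simpa using this)
        simp [hs, relu, max_eq_left h0.le]


lemma totalDegree_affine_le {ι σ : Type*} (s : Finset ι) (A : ι → ℝ) (g : ι → σ) (b : ℝ) :
    ((∑ u ∈ s, C (A u) * X (g u)) + C b).totalDegree ≤ 1 := by
  refine (totalDegree_add _ _).trans (max_le ?_ (by simp [totalDegree_C]))
  refine totalDegree_finsetSum_le fun u _ => (totalDegree_mul _ _).trans ?_
  simp [totalDegree_C, totalDegree_X]

lemma attention_famSpline {n p d m : ℕ} (AQ AK : Matrix (Fin d) (Fin n) ℝ)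
    (AV : Matrix (Fin m) (Fin n) ℝ) (BQ BK : Matrix (Fin d) (Fin p) ℝ)
    (BV : Matrix (Fin m) (Fin p) ℝ) :
    FamSpline (Fin n × Fin p) (Fin m × Fin p) 3
      (fun x ij => attention AQ AK AV BQ BK BV (Matrix.of fun a b => x (a, b)) ij.1 ij.2) := by
  have h3 : (3:ℕ) = 1 + 2 := rfl
  rw [h3]
  refine FamSpline.reluSum
    (P := fun ij s => (∑ u, C (AV ij.1 u) * X ((u, s) : Fin n × Fin p)) + C (BV ij.1 s))
    (Q := fun ij s => ∑ e, ((∑ u, C (AK e u) * X ((u, s) : Fin n × Fin p)) + C (BK e s)) *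
        ((∑ u, C (AQ e u) * X ((u, ij.2) : Fin n × Fin p)) + C (BQ e ij.2))) ?_ ?_ ?_
  · intro j s; exact totalDegree_affine_le ..
  · intro j s
    refine totalDegree_finsetSum_le fun e _ => (totalDegree_mul _ _).trans ?_
    exact add_le_add (totalDegree_affine_le ..) (totalDegree_affine_le ..)
  · intro x ij
    simp [attention, matRelu, Matrix.mul_apply, Matrix.add_apply, Matrix.transpose_apply,
      Matrix.of_apply, map_sum, _root_.map_mul, map_add, eval_C, eval_X, mul_comm]

lemma IsNN.famSpline {a b : ℕ} {φ : (Fin a → ℝ) → Fin b → ℝ} (h : IsNN φ) :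
    FamSpline (Fin a) (Fin b) 1 φ := by
  induction h with
  | affine A c =>
    refine FamSpline.ofPoly (fun i => (∑ u, C (A i u) * X u) + C (c i))
      (fun i => totalDegree_affine_le ..) ?_
    intro x i
    simp [Matrix.mulVec, dotProduct]
  | layer A v hg ih =>
    have inner : FamSpline _ _ 1 (fun x i => relu (A.mulVec x i + v i)) := by
      have h1 : (1:ℕ) = 0 + 1 := rfl
      rw [h1]
      refine FamSpline.reluSum (S := Unit) (P := fun _ _ => 1)
        (Q := fun i _ => (∑ u, C (A i u) * X u) + C (v i)) (by simp)
        (fun i _ => totalDegree_affine_le ..) ?_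
      intro x i
      simp [Matrix.mulVec, dotProduct]
    simpa using FamSpline.comp le_rfl inner ih

lemma colwise_famSpline {a c p k : ℕ} (hk : 1 ≤ k) {φ : (Fin a → ℝ) → Fin c → ℝ}
    (h : FamSpline (Fin a) (Fin c) k φ) :
    FamSpline (Fin a × Fin p) (Fin c × Fin p) k
      (fun x ij => colwise φ (Matrix.of fun u j => x (u, j)) ij.1 ij.2) := by
  refine FamSpline.ofCoords fun ij => ?_
  refine ⟨Fin c, inferInstance, fun x => φ (fun r => x (r, ij.2)), ij.1, ?_, fun x => rfl⟩
  have proj : FamSpline (Fin a × Fin p) (Fin a) 1 (fun x r => x (r, ij.2)) :=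
    FamSpline.ofPoly (fun r => X ((r, ij.2) : Fin a × Fin p))
      (fun r => by simp [totalDegree_X]) (fun x r => by simp)
  simpa using FamSpline.comp hk proj h

lemma multihead_famSpline {n p d m h : ℕ}
    (AQ AK : Fin h → Matrix (Fin d) (Fin n) ℝ) (AV : Fin h → Matrix (Fin m) (Fin n) ℝ)
    (BQ BK : Fin h → Matrix (Fin d) (Fin p) ℝ) (BV : Fin h → Matrix (Fin m) (Fin p) ℝ) :
    FamSpline (Fin n × Fin p) (Fin (h * m) × Fin p) 3
      (fun x ij => multiheadAttention AQ AK AV BQ BK BV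
        (Matrix.of fun a b => x (a, b)) ij.1 ij.2) := by
  refine FamSpline.ofCoords fun ij => ?_
  exact ⟨Fin m × Fin p, inferInstance, _, ((finProdFinEquiv.symm ij.1).2, ij.2),
    attention_famSpline (AQ (finProdFinEquiv.symm ij.1).1) (AK (finProdFinEquiv.symm ij.1).1)
      (AV (finProdFinEquiv.symm ij.1).1) (BQ (finProdFinEquiv.symm ij.1).1)
      (BK (finProdFinEquiv.symm ij.1).1) (BV (finProdFinEquiv.symm ij.1).1),
    fun x => rfl⟩

lemma encoderBlock_famSpline {n r p : ℕ}
    {f : Matrix (Fin n) (Fin p) ℝ → Matrix (Fin r) (Fin p) ℝ} (hf : IsEncoderBlock f) :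
    FamSpline (Fin n × Fin p) (Fin r × Fin p) 3
      (fun x ij => f (Matrix.of fun a b => x (a, b)) ij.1 ij.2) := by
  obtain ⟨d, m, h, AQ, AK, AV, BQ, BK, BV, φ, hφ, rfl⟩ := hf
  have hm := multihead_famSpline AQ AK AV BQ BK BV
  have hc := colwise_famSpline (p := p) le_rfl hφ.famSpline
  have h2 := FamSpline.comp le_rfl hm hc
  exact h2.congr fun x => rfl

lemma encoder_famSpline {n r p t : ℕ}
    {f : Matrix (Fin n) (Fin p) ℝ → Matrix (Fin r) (Fin p) ℝ} (hf : IsEncoder t f) :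
    FamSpline (Fin n × Fin p) (Fin r × Fin p) (3 ^ t)
      (fun x ij => f (Matrix.of fun a b => x (a, b)) ij.1 ij.2) := by
  induction hf with
  | block g hg =>
    rw [pow_one]
    exact encoderBlock_famSpline hg
  | comp t g1 g2 hg1 hg2 ih =>
    have h1 := encoderBlock_famSpline hg1
    have h2 := FamSpline.comp (Nat.one_le_pow _ _ (by norm_num)) h1 ih
    rw [pow_succ, mul_comm]
    exact h2.congr fun x => rfl

lemma SplineData.toIsSpline {ι : Type} [Fintype ι] {k : ℕ} {g : (ι → ℝ) → ℝ}
    (hc : Continuous g) (h : SplineData ι k g) : IsSpline ι k g := by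
  obtain ⟨B, iB, π, hd, hp⟩ := h
  letI := iB
  refine ⟨hc, Fintype.card B, fun i => π ((Fintype.equivFin B).symm i),
    fun i => hd _, fun θ => ?_⟩
  obtain ⟨ξ, h1, h2⟩ := hp (fun b => θ (Fintype.equivFin B b))
  refine ⟨ξ, h1, fun x hx => h2 x fun b => ?_⟩
  simpa using hx (Fintype.equivFin B b)

/-- Every `t`-layer ReLU-activated encoder is a spline of degree `3^t`. -/
theorem encoder_is_spline (n r p t : ℕ)
    (f : Matrix (Fin n) (Fin p) ℝ → Matrix (Fin r) (Fin p) ℝ)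
    (hf : IsEncoder t f) : IsMatrixSpline (3 ^ t) f := by
  intro i j
  have h := encoder_famSpline hf
  exact SplineData.toIsSpline ((continuous_apply ((i, j) : Fin r × Fin p)).comp h.1)
    (h.2 (i, j))
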